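/- arXiv:1511.08888 — 5 statements merged into one kernel-verified Lean document; each statement's English description precedes it below -/
import Mathlib

section
/- Let d ≥ 1 and k ∈ ℕ, and set r' = k + 1 + d/2. Let f, g : ℝ^d → ℝ be compactly supported functions of class C^{k+1}, and let χ : ℝ^d → ℝ be a compactly supported continuous function all of whose moments of order at most 2k vanish, i.e. ∫_{ℝ^d} w^j χ(w) dw = 0 for every multi-index j with |j| ≤ 2k. Then there exists a constant C, depending only on d, k, f, g and χ, such that for all natural numbers n ≤ m ≤ p and all x, y, z ∈ ℝ^d one has |∫_{ℝ^d} f^n_x(u) · g^m_y(u) · χ^p_z(u) du| ≤ C · 2^{n d/2} · 2^{−r'(p−m)}. -/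
/-!
Substituting `u = z + 2^{-p} w` turns the integral into `2^{(n+m-p)d/2} ∫ H w * χ w dw` with
`H w = f (a • w + b) * g (c • w + e)`, `a = 2^{n-p} ≤ c = 2^{m-p}`. Every derivative of order
`k + 1` of `H` is `O(c^{k+1})` uniformly, so on the (bounded) support of `χ` the function `H`
differs from its Taylor polynomial of degree `k` at `0` by `O(c^{k+1})`, and that polynomial
integrates to zero against `χ` because the moments of `χ` vanish.
-/

open MeasureTheory Finset

theorem norm_map_add_sub_sum_iteratedFDeriv_le {E F : Type*} [NormedAddCommGroup E]
    [NormedSpace ℝ E] [NormedAddCommGroup F] [NormedSpace ℝ F] [CompleteSpace F] {f : E → F} {n : ℕ}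
    (hf : ContDiff ℝ (n + 1) f) {M : ℝ} (hM : ∀ y, ‖iteratedFDeriv ℝ (n + 1) f y‖ ≤ M)
    (x y : E) :
    ‖f (x + y) - ∑ k ∈ range (n + 1), (k.factorial : ℝ)⁻¹ • iteratedFDeriv ℝ k f x (fun _ ↦ y)‖ ≤
      M * ‖y‖ ^ (n + 1) := by
  rw [map_add_eq_sum_add_integral_iteratedFDeriv fun t _ ↦ hf.contDiffAt, add_sub_cancel_left,
    norm_smul, norm_inv, norm_natCast]
  refine (mul_le_of_le_one_left (norm_nonneg _)
    (inv_le_one_of_one_le₀ (by exact_mod_cast n.factorial_pos))).trans ?_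
  refine (intervalIntegral.norm_integral_le_of_norm_le_const (C := M * ‖y‖ ^ (n + 1))
    fun t ht ↦ ?_).trans_eq (by simp)
  rw [Set.uIoc_of_le zero_le_one] at ht
  have ht' : ‖(1 - t) ^ n‖ ≤ 1 := by
    rw [norm_pow, Real.norm_of_nonneg (sub_nonneg.2 ht.2)]
    exact pow_le_one₀ (sub_nonneg.2 ht.2) (by linarith [ht.1])
  calc ‖(1 - t) ^ n • iteratedFDeriv ℝ (n + 1) f (x + t • y) (fun _ ↦ y)‖
      ≤ ‖iteratedFDeriv ℝ (n + 1) f (x + t • y) (fun _ ↦ y)‖ := by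
        rw [norm_smul]
        exact mul_le_of_le_one_left (norm_nonneg _) ht'
    _ ≤ ‖iteratedFDeriv ℝ (n + 1) f (x + t • y)‖ * ∏ _ : Fin (n + 1), ‖y‖ :=
        ContinuousMultilinearMap.le_opNorm _ _
    _ ≤ M * ‖y‖ ^ (n + 1) := by
        rw [prod_const, Finset.card_fin]
        gcongr
        exact hM _

theorem prod_comp_eq_prod_pow_card_filter {ι κ M : Type*} [Fintype ι] [Fintype κ]
    [DecidableEq κ] [CommMonoid M] (w : κ → M) (r : ι → κ) :
    ∏ l, w (r l) = ∏ i, w i ^ #{l | r l = i} := by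
  rw [← prod_fiberwise' univ r w]
  simp_rw [prod_const]

theorem ContinuousMultilinearMap.apply_diag_eq_sum {ι : Type*} [Fintype ι] [DecidableEq ι]
    {j : ℕ} (T : ContinuousMultilinearMap ℝ (fun _ : Fin j ↦ ι → ℝ) ℝ) (w : ι → ℝ) :
    T (fun _ ↦ w) = ∑ r : Fin j → ι, T (fun l ↦ Pi.single (r l) 1) * ∏ l, w (r l) := by
  conv_lhs => rw [pi_eq_sum_univ' w, T.map_sum]
  refine sum_congr rfl fun r _ ↦ ?_
  rw [T.map_smul_univ, smul_eq_mul, mul_comm]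

def HasVanishingMoments {ι : Type*} [Fintype ι] (χ : (ι → ℝ) → ℝ) (N : ℕ) : Prop :=
  ∀ j : ι → ℕ, ∑ i, j i ≤ N → ∫ w, (∏ i, w i ^ j i) * χ w = 0

theorem HasVanishingMoments.mono {ι : Type*} [Fintype ι] {χ : (ι → ℝ) → ℝ} {N N' : ℕ}
    (hχ : HasVanishingMoments χ N') (h : N ≤ N') : HasVanishingMoments χ N :=
  fun j hj ↦ hχ j (hj.trans h)

theorem HasVanishingMoments.integral_multilinear_mul_eq_zero {ι : Type*} [Fintype ι]
    {χ : (ι → ℝ) → ℝ} {N : ℕ} (hχ : HasVanishingMoments χ N) (hcont : Continuous χ)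
    (hsupp : HasCompactSupport χ) {j : ℕ} (hj : j ≤ N)
    (T : ContinuousMultilinearMap ℝ (fun _ : Fin j ↦ ι → ℝ) ℝ) :
    ∫ w, T (fun _ ↦ w) * χ w = 0 := by
  classical
  have hmoment (r : Fin j → ι) : ∫ w : ι → ℝ, (∏ l, w (r l)) * χ w = 0 := by
    simp_rw [prod_comp_eq_prod_pow_card_filter _ r]
    refine hχ _ ?_
    rwa [← card_eq_sum_card_fiberwise fun l _ ↦ mem_univ (r l), card_univ, Fintype.card_fin]
  simp_rw [T.apply_diag_eq_sum, sum_mul, mul_assoc]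
  rw [integral_finsetSum _ fun r _ ↦ ?_]
  · exact sum_eq_zero fun r _ ↦ by rw [integral_const_mul, hmoment, mul_zero]
  · exact (((continuous_finsetProd _ fun l _ ↦ continuous_apply (r l)).mul
      hcont).integrable_of_hasCompactSupport hsupp.mul_left).const_mul _

theorem HasVanishingMoments.abs_integral_mul_le {ι : Type*} [Fintype ι] {χ H : (ι → ℝ) → ℝ}
    {N : ℕ} (hχ : HasVanishingMoments χ N) (hcont : Continuous χ) (hsupp : HasCompactSupport χ)
    (hH : ContDiff ℝ (N + 1) H) {M : ℝ} (hM : ∀ y, ‖iteratedFDeriv ℝ (N + 1) H y‖ ≤ M)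
    {R : ℝ} (hR : ∀ w, χ w ≠ 0 → ‖w‖ ≤ R) :
    |∫ w, H w * χ w| ≤ M * R ^ (N + 1) * ∫ w, |χ w| := by
  set P : (ι → ℝ) → ℝ := fun w ↦
    ∑ j ∈ range (N + 1), (j.factorial : ℝ)⁻¹ * iteratedFDeriv ℝ j H 0 (fun _ ↦ w)
  have hint {φ : (ι → ℝ) → ℝ} (hφ : Continuous φ) : Integrable fun w ↦ φ w * χ w :=
    (hφ.mul hcont).integrable_of_hasCompactSupport hsupp.mul_left
  have hPcont : Continuous P := by fun_prop
  have hPχ : ∫ w, P w * χ w = 0 := by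
    simp_rw [P, sum_mul, mul_assoc]
    rw [integral_finsetSum _ fun j _ ↦ (hint (φ := fun w ↦ iteratedFDeriv ℝ j H 0 fun _ ↦ w)
      (by fun_prop)).const_mul _]
    refine sum_eq_zero fun j hj ↦ ?_
    rw [integral_const_mul, hχ.integral_multilinear_mul_eq_zero hcont hsupp
      (mem_range_succ_iff.1 hj), mul_zero]
  have hremainder (w : ι → ℝ) : ‖(H w - P w) * χ w‖ ≤ M * R ^ (N + 1) * |χ w| := by
    rw [norm_mul, Real.norm_eq_abs]
    by_cases hw : χ w = 0
    · simp [hw]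
    refine mul_le_mul_of_nonneg_right ?_ (abs_nonneg _)
    calc ‖H w - P w‖ ≤ M * ‖w‖ ^ (N + 1) := by
          simpa only [zero_add, smul_eq_mul] using norm_map_add_sub_sum_iteratedFDeriv_le hH hM 0 w
      _ ≤ M * R ^ (N + 1) := by
          gcongr
          exacts [(norm_nonneg _).trans (hM 0), hR w hw]
  calc |∫ w, H w * χ w| = ‖∫ w, (H w - P w) * χ w‖ := by
        rw [Real.norm_eq_abs, ← add_zero (∫ w, (H w - P w) * χ w), ← hPχ, ← integral_add]
        · simp_rw [sub_mul, sub_add_cancel]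
        exacts [hint (hH.continuous.sub hPcont), hint hPcont]
    _ ≤ ∫ w, M * R ^ (N + 1) * |χ w| :=
        norm_integral_le_of_norm_le ((hcont.abs.integrable_of_hasCompactSupport
          hsupp.abs).const_mul _) (.of_forall hremainder)
    _ = M * R ^ (N + 1) * ∫ w, |χ w| := integral_const_mul _ _

theorem exists_forall_norm_iteratedFDeriv_le_of_hasCompactSupport {E F : Type*}
    [NormedAddCommGroup E] [NormedSpace ℝ E] [NormedAddCommGroup F] [NormedSpace ℝ F]
    {f : E → F} {N : ℕ} (hf : ContDiff ℝ N f) (hsupp : HasCompactSupport f) :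
    ∃ C, ∀ i ≤ N, ∀ x, ‖iteratedFDeriv ℝ i f x‖ ≤ C := by
  have hbound (i : ℕ) (hi : i ≤ N) : ∃ C, ∀ x, ‖iteratedFDeriv ℝ i f x‖ ≤ C :=
    (hsupp.iteratedFDeriv i).exists_bound_of_continuous
      (hf.continuous_iteratedFDeriv (by exact_mod_cast hi))
  choose! C hC using hbound
  exact ⟨(range (N + 1)).sup' nonempty_range_add_one C, fun i hi x ↦
    (hC i hi x).trans (le_sup' C (mem_range_succ_iff.2 hi))⟩

theorem iteratedFDeriv_comp_smul_add {𝕜 E F : Type*} [NontriviallyNormedField 𝕜]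
    [NormedAddCommGroup E] [NormedSpace 𝕜 E] [NormedAddCommGroup F] [NormedSpace 𝕜 F]
    {f : E → F} {i : ℕ} (hf : ContDiff 𝕜 i f) (a : 𝕜) (b x : E) :
    iteratedFDeriv 𝕜 i (fun w ↦ f (a • w + b)) x = a ^ i • iteratedFDeriv 𝕜 i f (a • x + b) := by
  rw [iteratedFDeriv_comp_const_smul a (f := fun v ↦ f (v + b))
    (hf.comp (contDiff_id.add contDiff_const))]
  exact congrArg _ (iteratedFDeriv_comp_add_right i b (a • x))

theorem norm_iteratedFDeriv_mul_comp_smul_add_le {E : Type*} [NormedAddCommGroup E]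
    [NormedSpace ℝ E] {f g : E → ℝ} {N : ℕ} (hf : ContDiff ℝ N f) (hg : ContDiff ℝ N g)
    {Cf Cg : ℝ} (hCf : ∀ i ≤ N, ∀ x, ‖iteratedFDeriv ℝ i f x‖ ≤ Cf)
    (hCg : ∀ i ≤ N, ∀ x, ‖iteratedFDeriv ℝ i g x‖ ≤ Cg) {a c : ℝ} (hac : |a| ≤ c) (b e x : E) :
    ‖iteratedFDeriv ℝ N (fun w ↦ f (a • w + b) * g (c • w + e)) x‖ ≤ 2 ^ N * Cf * Cg * c ^ N := by
  have hCf0 : 0 ≤ Cf := (norm_nonneg _).trans (hCf 0 N.zero_le x)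
  have hc0 : 0 ≤ c := (abs_nonneg a).trans hac
  have hterm (i : ℕ) (hi : i ∈ range (N + 1)) :
      (N.choose i : ℝ) * ‖iteratedFDeriv ℝ i (fun w ↦ f (a • w + b)) x‖ *
        ‖iteratedFDeriv ℝ (N - i) (fun w ↦ g (c • w + e)) x‖ ≤
        N.choose i * (Cf * Cg * c ^ N) := by
    have hi : i ≤ N := mem_range_succ_iff.1 hi
    rw [iteratedFDeriv_comp_smul_add (hf.of_le (by exact_mod_cast hi)),
      iteratedFDeriv_comp_smul_add (hg.of_le (by exact_mod_cast N.sub_le i)), norm_smul,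
      norm_smul, norm_pow, norm_pow, Real.norm_eq_abs, Real.norm_eq_abs, abs_of_nonneg hc0]
    calc (N.choose i : ℝ) * (|a| ^ i * ‖iteratedFDeriv ℝ i f (a • x + b)‖) *
          (c ^ (N - i) * ‖iteratedFDeriv ℝ (N - i) g (c • x + e)‖)
        ≤ N.choose i * (c ^ i * Cf) * (c ^ (N - i) * Cg) := by
          gcongr
          exacts [hCf i hi _, hCg _ (N.sub_le i) _]
      _ = N.choose i * (Cf * Cg * c ^ N) := by
          rw [← pow_sub_mul_pow c hi]
          ring
  have hF : ContDiff ℝ N fun w ↦ f (a • w + b) := hf.comp (by fun_prop)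
  have hG : ContDiff ℝ N fun w ↦ g (c • w + e) := hg.comp (by fun_prop)
  calc _ ≤ _ := norm_iteratedFDeriv_mul_le hF hG x le_rfl
    _ ≤ ∑ i ∈ range (N + 1), (N.choose i : ℝ) * (Cf * Cg * c ^ N) := sum_le_sum hterm
    _ = 2 ^ N * Cf * Cg * c ^ N := by
        rw [← sum_mul, ← Nat.cast_sum, Nat.sum_range_choose]
        push_cast
        ring

theorem exists_abs_integral_mul_comp_smul_add_le {ι : Type*} [Fintype ι] {f g χ : (ι → ℝ) → ℝ}
    {N : ℕ} (hf : ContDiff ℝ (N + 1) f) (hfsupp : HasCompactSupport f)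
    (hg : ContDiff ℝ (N + 1) g) (hgsupp : HasCompactSupport g)
    (hχ : HasVanishingMoments χ N) (hcont : Continuous χ) (hsupp : HasCompactSupport χ) :
    ∃ C, ∀ a c : ℝ, |a| ≤ c → ∀ b e : ι → ℝ,
      |∫ w, f (a • w + b) * g (c • w + e) * χ w| ≤ C * c ^ (N + 1) := by
  obtain ⟨Cf, hCf⟩ := exists_forall_norm_iteratedFDeriv_le_of_hasCompactSupport hf hfsupp
  obtain ⟨Cg, hCg⟩ := exists_forall_norm_iteratedFDeriv_le_of_hasCompactSupport hg hgsupp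
  obtain ⟨R, hR⟩ := hsupp.isBounded.subset_closedBall (0 : ι → ℝ)
  refine ⟨2 ^ (N + 1) * Cf * Cg * R ^ (N + 1) * ∫ w, |χ w|, fun a c hac b e ↦ ?_⟩
  have hH : ContDiff ℝ (N + 1) fun w ↦ f (a • w + b) * g (c • w + e) :=
    (hf.comp (by fun_prop)).mul (hg.comp (by fun_prop))
  calc _ ≤ 2 ^ (N + 1) * Cf * Cg * c ^ (N + 1) * R ^ (N + 1) * ∫ w, |χ w| :=
        hχ.abs_integral_mul_le hcont hsupp hH
          (norm_iteratedFDeriv_mul_comp_smul_add_le hf hg hCf hCg hac b e)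
          fun w hw ↦ mem_closedBall_zero_iff.1 (hR (subset_tsupport χ hw))
    _ = _ := by ring

theorem integral_mul_mul_comp_smul_sub {ι : Type*} [Fintype ι] (f g χ : (ι → ℝ) → ℝ) {r : ℝ}
    (hr : r ≠ 0) (s t : ℝ) (x y z : ι → ℝ) :
    ∫ u, f (s • (u - x)) * g (t • (u - y)) * χ (r • (u - z)) =
      |r ^ Fintype.card ι|⁻¹ *
        ∫ w, f ((s / r) • w + s • (z - x)) * g ((t / r) • w + t • (z - y)) * χ w := by
  have hrescale (s : ℝ) (u x : ι → ℝ) : (s / r) • r • (u - z) + s • (z - x) = s • (u - x) := by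
    rw [smul_smul, div_mul_cancel₀ _ hr, ← smul_add, sub_add_sub_cancel]
  set Φ : (ι → ℝ) → ℝ := fun w ↦
    f ((s / r) • w + s • (z - x)) * g ((t / r) • w + t • (z - y)) * χ w
  calc ∫ u, f (s • (u - x)) * g (t • (u - y)) * χ (r • (u - z)) = ∫ u, Φ (r • (u - z)) := by
        simp only [Φ, hrescale]
    _ = ∫ u, Φ (r • u) := integral_sub_right_eq_self (fun u ↦ Φ (r • u)) z
    _ = |r ^ Fintype.card ι|⁻¹ * ∫ w, Φ w := by
        rw [Measure.integral_comp_smul, Module.finrank_fintype_fun_eq_card, abs_inv, smul_eq_mul]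

theorem stmt_0_general (d k : ℕ)
    (f g χ : (Fin d → ℝ) → ℝ)
    (hf : ContDiff ℝ (k + 1 : ℕ) f) (hfsupp : HasCompactSupport f)
    (hg : ContDiff ℝ (k + 1 : ℕ) g) (hgsupp : HasCompactSupport g)
    (hχ : Continuous χ) (hχsupp : HasCompactSupport χ)
    (hmom : ∀ j : Fin d → ℕ, (∑ i, j i) ≤ 2 * k →
      ∫ w : Fin d → ℝ, (∏ i, w i ^ j i) * χ w = 0) :
    ∃ C : ℝ, ∀ n m p : ℕ, n ≤ m → m ≤ p → ∀ x y z : Fin d → ℝ,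
      |∫ u : Fin d → ℝ,
          ((2 : ℝ) ^ ((n : ℝ) * d / 2) * f ((2 ^ n : ℝ) • (u - x))) *
          ((2 : ℝ) ^ ((m : ℝ) * d / 2) * g ((2 ^ m : ℝ) • (u - y))) *
          ((2 : ℝ) ^ ((p : ℝ) * d / 2) * χ ((2 ^ p : ℝ) • (u - z)))|
        ≤ C * (2 : ℝ) ^ ((n : ℝ) * d / 2) *
            (2 : ℝ) ^ (-(((k : ℝ) + 1 + (d : ℝ) / 2) * ((p : ℝ) - (m : ℝ)))) := by
  obtain ⟨C, hC⟩ := exists_abs_integral_mul_comp_smul_add_le (by exact_mod_cast hf) hfsupp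
    (by exact_mod_cast hg) hgsupp (HasVanishingMoments.mono hmom (by omega)) hχ hχsupp
  refine ⟨C, fun n m p hnm hmp x y z ↦ ?_⟩
  have hac : |(2 : ℝ) ^ n / 2 ^ p| ≤ 2 ^ m / 2 ^ p := by
    rw [abs_of_nonneg (by positivity)]
    gcongr
    exact one_le_two
  simp only [mul_mul_mul_comm, integral_const_mul]
  rw [integral_mul_mul_comp_smul_sub f g χ (by positivity), Fintype.card_fin, ← mul_assoc,
    abs_mul, abs_of_nonneg (by positivity)]
  calc _ ≤ (2 : ℝ) ^ ((n : ℝ) * d / 2) * (2 : ℝ) ^ ((m : ℝ) * d / 2) *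
        (2 : ℝ) ^ ((p : ℝ) * d / 2) * |((2 : ℝ) ^ p) ^ d|⁻¹ * (C * (2 ^ m / 2 ^ p) ^ (k + 1)) := by
        gcongr
        exact hC _ _ hac _ _
    _ = _ := by
        have h2 : (0 : ℝ) < 2 := two_pos
        simp only [← Real.rpow_natCast, ← Real.rpow_mul h2.le, ← Real.rpow_neg h2.le,
          abs_of_pos (Real.rpow_pos_of_pos h2 _), ← Real.rpow_sub h2, ← Real.rpow_add h2]
        rw [mul_assoc C, ← Real.rpow_add h2, mul_left_comm, ← Real.rpow_add h2]
        congr 2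
        push_cast
        ring

/-- wavelet-type decorrelation estimate.
`f^n_x(u) = 2^{nd/2} f(2^n (u - x))` etc. -/
theorem stmt_0 (d k : ℕ) (hd : 1 ≤ d)
    (f g χ : (Fin d → ℝ) → ℝ)
    (hf : ContDiff ℝ (k + 1 : ℕ) f) (hfsupp : HasCompactSupport f)
    (hg : ContDiff ℝ (k + 1 : ℕ) g) (hgsupp : HasCompactSupport g)
    (hχ : Continuous χ) (hχsupp : HasCompactSupport χ)
    (hmom : ∀ j : Fin d → ℕ, (∑ i, j i) ≤ 2 * k →
      ∫ w : Fin d → ℝ, (∏ i, w i ^ j i) * χ w = 0) :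
    ∃ C : ℝ, ∀ n m p : ℕ, n ≤ m → m ≤ p → ∀ x y z : Fin d → ℝ,
      |∫ u : Fin d → ℝ,
          ((2 : ℝ) ^ ((n : ℝ) * d / 2) * f ((2 ^ n : ℝ) • (u - x))) *
          ((2 : ℝ) ^ ((m : ℝ) * d / 2) * g ((2 ^ m : ℝ) • (u - y))) *
          ((2 : ℝ) ^ ((p : ℝ) * d / 2) * χ ((2 ^ p : ℝ) • (u - z)))|
        ≤ C * (2 : ℝ) ^ ((n : ℝ) * d / 2) *
            (2 : ℝ) ^ (-(((k : ℝ) + 1 + (d : ℝ) / 2) * ((p : ℝ) - (m : ℝ)))) :=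
  stmt_0_general d k f g χ hf hfsupp hg hgsupp hχ hχsupp hmom
end

section
/- Let g : ℝ → ℝ be twice continuously differentiable, C ∈ ℝ, T > 0, and let ξ : ℝ² → ℝ be continuous and periodic. Let M > 0 satisfy g(M) = g(−M) = 0. Let u be a classical solution on [0,T]×ℝ², periodic in its space variable, of the renormalized gPAM equation ∂_t u = Δu + g(u)·(ξ − C g'(u)), with initial condition u(0,·) = u₀ satisfying |u₀(x)| ≤ M for all x ∈ ℝ². Then |u(t,x)| ≤ M for all (t,x) ∈ [0,T]×ℝ². -/
/-!
The constants `±M` solve the equation because `g(±M) = 0`, and `u` is compared with them.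
Since `g` vanishes at `M` and is Lipschitz on the (bounded) range of `u`, while `ξ` and `g'`
are bounded, the reaction term is at most `K (u - M)` where `u > M`. Hence
`w = (u - M) e^{-(K+1)t}` cannot have a positive maximum over `[0,T] × 𝕋²`: at such a
maximum `t > 0`, the Laplacian of `u` is `≤ 0` and `∂ₜ w ≥ 0`, contradicting the equation.
The lower bound is the same argument applied to `-u`.
-/

open Set Topology Real

/-- A function of two space variables is periodic (with period `2π` in each
direction, i.e. invariant under translation by `2πk`, `k ∈ ℤ²`). -/
def SpacePeriodic (f : ℝ → ℝ → ℝ) : Prop :=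
  ∀ (k₁ k₂ : ℤ) (x y : ℝ), f (x + 2 * Real.pi * k₁) (y + 2 * Real.pi * k₂) = f x y

/-- No differentiability is needed: where `deriv f` is not differentiable at `a`,
`deriv (deriv f) a = 0`. -/
theorem IsLocalMax.deriv_deriv_nonpos {f : ℝ → ℝ} {a : ℝ} (h : IsLocalMax f a)
    (hc : ContinuousAt f a) : deriv (deriv f) a ≤ 0 := by
  by_contra! hpos
  have hmin : IsLocalMin f a := isLocalMin_of_deriv_deriv_pos hpos h.deriv_eq_zero hc
  have hconst : f =ᶠ[𝓝 a] fun _ => f a :=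
    (h.and hmin).mono fun x hx => le_antisymm hx.1 hx.2
  have hderiv : deriv f =ᶠ[𝓝 a] fun _ => 0 := hconst.deriv.trans (by simp)
  rw [hderiv.deriv_eq, deriv_const] at hpos
  exact lt_irrefl _ hpos

theorem IsMaxOn.hasDerivAt_nonneg {f : ℝ → ℝ} {a b f' : ℝ} (hmax : IsMaxOn f (Icc a b) b)
    (hab : a < b) (hf : HasDerivAt f f' b) : 0 ≤ f' := by
  have hcone : a - b ∈ posTangentConeAt (Icc a b) b :=
    sub_mem_posTangentConeAt_of_segment_subset
      ((convex_Icc a b).segment_subset (right_mem_Icc.2 hab.le) (left_mem_Icc.2 hab.le))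
  have h := hmax.localize.hasFDerivWithinAt_nonpos hf.hasFDerivAt.hasFDerivWithinAt hcone
  simp only [ContinuousLinearMap.toSpanSingleton_apply, smul_eq_mul] at h
  nlinarith

theorem exists_mem_Icc_add_two_pi_mul (x : ℝ) :
    ∃ x' ∈ Icc 0 (2 * π), ∃ k : ℤ, x' + 2 * π * k = x := by
  have hp : 0 < 2 * π := by positivity
  refine ⟨toIcoMod hp 0 x, Ico_subset_Icc_self (toIcoMod_mem_Ico' hp x),
    toIcoDiv hp 0 x, ?_⟩
  have h := toIcoMod_add_toIcoDiv_zsmul hp 0 x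
  rw [zsmul_eq_mul] at h
  linarith

theorem SpacePeriodic.exists_mem_Icc_eq {f : ℝ → ℝ → ℝ} (hf : SpacePeriodic f) (x y : ℝ) :
    ∃ x' ∈ Icc 0 (2 * π), ∃ y' ∈ Icc 0 (2 * π), f x' y' = f x y := by
  obtain ⟨x', hx', k₁, rfl⟩ := exists_mem_Icc_add_two_pi_mul x
  obtain ⟨y', hy', k₂, rfl⟩ := exists_mem_Icc_add_two_pi_mul y
  exact ⟨x', hx', y', hy', (hf k₁ k₂ x' y').symm⟩

theorem SpacePeriodic.comp {f : ℝ → ℝ → ℝ} (hf : SpacePeriodic f) (φ : ℝ → ℝ) :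
    SpacePeriodic fun x y => φ (f x y) :=
  fun k₁ k₂ x y => by simp only [hf k₁ k₂ x y]

section Periodic

variable {v : ℝ → ℝ → ℝ → ℝ} {T : ℝ}

theorem exists_forall_le_of_spacePeriodic (hT : 0 ≤ T) (hv : ∀ t, SpacePeriodic (v t))
    (hvc : ContinuousOn (fun p : ℝ × ℝ × ℝ => v p.1 p.2.1 p.2.2) (Icc 0 T ×ˢ univ)) :
    ∃ t₀ ∈ Icc 0 T, ∃ x₀ y₀, ∀ t ∈ Icc 0 T, ∀ x y, v t x y ≤ v t₀ x₀ y₀ := by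
  have hQ : IsCompact (Icc 0 T ×ˢ (Icc 0 (2 * π) ×ˢ Icc 0 (2 * π))) :=
    isCompact_Icc.prod (isCompact_Icc.prod isCompact_Icc)
  obtain ⟨⟨t₀, x₀, y₀⟩, ⟨ht₀, -⟩, hmax⟩ :=
    hQ.exists_isMaxOn ⟨(0, 0, 0), by simp [hT, pi_pos.le]⟩
      (hvc.mono (prod_mono subset_rfl (subset_univ _)))
  refine ⟨t₀, ht₀, x₀, y₀, fun t ht x y => ?_⟩
  obtain ⟨x', hx', y', hy', h⟩ := (hv t).exists_mem_Icc_eq x y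
  rw [← h]
  exact hmax (show (t, x', y') ∈ _ from ⟨ht, hx', hy'⟩)

theorem exists_abs_le_of_spacePeriodic (hv : ∀ t, SpacePeriodic (v t))
    (hvc : ContinuousOn (fun p : ℝ × ℝ × ℝ => v p.1 p.2.1 p.2.2) (Icc 0 T ×ˢ univ)) :
    ∃ B, ∀ t ∈ Icc 0 T, ∀ x y, |v t x y| ≤ B := by
  rcases lt_or_ge T 0 with hT | hT
  · exact ⟨0, fun t ht => absurd (ht.1.trans ht.2) hT.not_ge⟩
  obtain ⟨t₀, -, x₀, y₀, h⟩ :=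
    exists_forall_le_of_spacePeriodic hT (fun t => (hv t).comp abs) hvc.abs
  exact ⟨_, h⟩

end Periodic

noncomputable def planeLaplacian (f : ℝ → ℝ → ℝ) (x y : ℝ) : ℝ :=
  deriv (fun a => deriv (fun b => f b y) a) x + deriv (fun b => deriv (fun a => f x a) b) y

theorem planeLaplacian_neg (f : ℝ → ℝ → ℝ) (x y : ℝ) :
    planeLaplacian (fun a b => -f a b) x y = -planeLaplacian f x y := by
  simp only [planeLaplacian, deriv.fun_neg', neg_add]

theorem planeLaplacian_nonpos_of_forall_le {f : ℝ → ℝ → ℝ} {x₀ y₀ : ℝ}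
    (hx : ContinuousAt (fun x => f x y₀) x₀) (hy : ContinuousAt (f x₀) y₀)
    (hmax : ∀ x y, f x y ≤ f x₀ y₀) : planeLaplacian f x₀ y₀ ≤ 0 :=
  add_nonpos (IsLocalMax.deriv_deriv_nonpos (.of_forall fun x => hmax x y₀) hx)
    (IsLocalMax.deriv_deriv_nonpos (.of_forall fun y => hmax x₀ y) hy)

section MaximumPrinciple

variable {u : ℝ → ℝ → ℝ → ℝ} {T K : ℝ}

theorem weak_maximum_principle {M : ℝ} (hup : ∀ t, SpacePeriodic (u t))
    (huc : ContinuousOn (fun p : ℝ × ℝ × ℝ => u p.1 p.2.1 p.2.2) (Icc 0 T ×ˢ univ))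
    (hut : ∀ x y : ℝ, ∀ t ∈ Ioc 0 T, DifferentiableAt ℝ (fun s => u s x y) t)
    (hsub : ∀ t ∈ Ioc 0 T, ∀ x y, M < u t x y →
      deriv (fun s => u s x y) t ≤ planeLaplacian (u t) x y + K * (u t x y - M))
    (hu0 : ∀ x y, u 0 x y ≤ M) :
    ∀ t ∈ Icc 0 T, ∀ x y, u t x y ≤ M := by
  intro t ht x y
  set w : ℝ → ℝ → ℝ → ℝ := fun t x y => (u t x y - M) * exp (-((K + 1) * t))
  have hwp : ∀ t, SpacePeriodic (w t) := fun t =>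
    (hup t).comp fun s => (s - M) * exp (-((K + 1) * t))
  have hwc : ContinuousOn (fun p : ℝ × ℝ × ℝ => w p.1 p.2.1 p.2.2) (Icc 0 T ×ˢ univ) :=
    (huc.sub continuousOn_const).mul (by fun_prop)
  obtain ⟨t₀, ht₀, x₀, y₀, hmax⟩ := exists_forall_le_of_spacePeriodic (ht.1.trans ht.2) hwp hwc
  suffices h : u t₀ x₀ y₀ ≤ M by
    have hw₀ : w t₀ x₀ y₀ ≤ 0 := mul_nonpos_of_nonpos_of_nonneg (by linarith) (exp_pos _).le
    exact sub_nonpos.1 (nonpos_of_mul_nonpos_left ((hmax t ht x y).trans hw₀) (exp_pos _))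
  by_contra! hM
  have ht₀' : t₀ ∈ Ioc 0 T :=
    ⟨ht₀.1.lt_of_ne (by rintro rfl; linarith [hu0 x₀ y₀]), ht₀.2⟩
  have hslice : Continuous fun p : ℝ × ℝ => u t₀ p.1 p.2 :=
    huc.comp_continuous (continuous_const.prodMk continuous_id) fun _ => ⟨ht₀, trivial⟩
  have hlap : planeLaplacian (u t₀) x₀ y₀ ≤ 0 :=
    planeLaplacian_nonpos_of_forall_le
      (hslice.comp (continuous_id.prodMk continuous_const)).continuousAt
      (hslice.comp (continuous_const.prodMk continuous_id)).continuousAt fun x y =>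
        sub_le_sub_iff_right M |>.1 (le_of_mul_le_mul_right (hmax t₀ ht₀ x y) (exp_pos _))
  have htime : (K + 1) * (u t₀ x₀ y₀ - M) ≤ deriv (fun s => u s x₀ y₀) t₀ := by
    have hd : HasDerivAt (fun s => w s x₀ y₀)
        ((deriv (fun s => u s x₀ y₀) t₀ - (K + 1) * (u t₀ x₀ y₀ - M)) *
          exp (-((K + 1) * t₀))) t₀ := by
      have he : HasDerivAt (fun s => exp (-((K + 1) * s)))
          (exp (-((K + 1) * t₀)) * -((K + 1) * 1)) t₀ :=
        ((hasDerivAt_id' t₀).const_mul (K + 1)).fun_neg.exp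
      exact (((hut x₀ y₀ t₀ ht₀').hasDerivAt.sub_const M).mul he).congr_deriv (by ring)
    have hnn := IsMaxOn.hasDerivAt_nonneg (fun s hs => hmax s ⟨hs.1, hs.2.trans ht₀.2⟩ x₀ y₀)
      ht₀'.1 hd
    exact sub_nonneg.1 (nonneg_of_mul_nonneg_left hnn (exp_pos _))
  linarith [hsub t₀ ht₀' x₀ y₀ hM]

theorem weak_minimum_principle {m : ℝ} (hup : ∀ t, SpacePeriodic (u t))
    (huc : ContinuousOn (fun p : ℝ × ℝ × ℝ => u p.1 p.2.1 p.2.2) (Icc 0 T ×ˢ univ))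
    (hut : ∀ x y : ℝ, ∀ t ∈ Ioc 0 T, DifferentiableAt ℝ (fun s => u s x y) t)
    (hsuper : ∀ t ∈ Ioc 0 T, ∀ x y, u t x y < m →
      planeLaplacian (u t) x y + K * (u t x y - m) ≤ deriv (fun s => u s x y) t)
    (hu0 : ∀ x y, m ≤ u 0 x y) :
    ∀ t ∈ Icc 0 T, ∀ x y, m ≤ u t x y := by
  have h := weak_maximum_principle (u := fun t x y => -u t x y) (M := -m) (K := K)
    (fun t => (hup t).comp Neg.neg) huc.neg
    (fun x y t ht => (hut x y t ht).neg)
    (fun t ht x y hlt => by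
      rw [deriv.fun_neg, planeLaplacian_neg]
      linarith [hsuper t ht x y (by linarith)])
    (fun x y => neg_le_neg (hu0 x y))
  exact fun t ht x y => neg_le_neg_iff.1 (h t ht x y)

end MaximumPrinciple

theorem exists_abs_gpam_reaction_le {g : ℝ → ℝ} (hg : ContDiff ℝ 1 g) (B C S : ℝ) :
    ∃ K, ∀ m ∈ Icc (-B) B, g m = 0 → ∀ s ∈ Icc (-B) B, ∀ z, |z| ≤ S →
      |g s * (z - C * deriv g s)| ≤ K * |s - m| := by
  obtain ⟨L, hL⟩ := (isCompact_Icc (a := -B) (b := B)).exists_bound_of_continuousOn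
    (hg.continuous_deriv le_rfl).continuousOn
  refine ⟨L * (S + |C| * L), fun m hm hgm s hs z hz => ?_⟩
  have hgs : |g s| ≤ L * |s - m| := by
    simpa [hgm] using (convex_Icc (-B) B).norm_image_sub_le_of_norm_deriv_le
      (fun x _ => (hg.differentiable one_ne_zero) x) hL hm hs
  have hr : |z - C * deriv g s| ≤ S + |C| * L := by
    refine (abs_sub _ _).trans (add_le_add hz ?_)
    rw [abs_mul]
    exact mul_le_mul_of_nonneg_left (hL s hs) (abs_nonneg C)
  calc |g s * (z - C * deriv g s)| = |g s| * |z - C * deriv g s| := abs_mul _ _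
    _ ≤ L * |s - m| * (S + |C| * L) :=
        mul_le_mul hgs hr (abs_nonneg _) ((abs_nonneg _).trans hgs)
    _ = L * (S + |C| * L) * |s - m| := by ring

theorem stmt_2_general
    (g : ℝ → ℝ) (hg : ContDiff ℝ 2 g)
    (C T : ℝ)
    (ξ : ℝ → ℝ → ℝ) (hξc : Continuous fun p : ℝ × ℝ => ξ p.1 p.2)
    (hξp : SpacePeriodic ξ)
    (M : ℝ) (hgM : g M = 0) (hgM' : g (-M) = 0)
    (u : ℝ → ℝ → ℝ → ℝ)
    -- `u` is periodic in its space variable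
    (hup : ∀ t, SpacePeriodic (u t))
    -- `u` is continuous on `[0,T] × ℝ²`
    (huc : ContinuousOn (fun p : ℝ × ℝ × ℝ => u p.1 p.2.1 p.2.2) (Icc 0 T ×ˢ univ))
    -- `u` is once continuously differentiable in time on `(0,T] × ℝ²`
    (hutime : ∀ x y : ℝ, ∀ t ∈ Ioc 0 T, DifferentiableAt ℝ (fun s => u s x y) t)
    -- the equation holds on `(0,T] × ℝ²`
    (heq : ∀ t ∈ Ioc 0 T, ∀ x y : ℝ,
      deriv (fun s => u s x y) t =
        (deriv (fun a => deriv (fun b => u t b y) a) x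
          + deriv (fun b => deriv (fun a => u t x a) b) y)
        + g (u t x y) * (ξ x y - C * deriv g (u t x y)))
    -- initial condition
    (hu0 : ∀ x y : ℝ, |u 0 x y| ≤ M) :
    ∀ t ∈ Icc 0 T, ∀ x y : ℝ, |u t x y| ≤ M := by
  obtain ⟨S, hS⟩ := exists_abs_le_of_spacePeriodic (T := 0) (fun _ => hξp)
    (hξc.comp continuous_snd).continuousOn
  obtain ⟨B, hB⟩ := exists_abs_le_of_spacePeriodic hup huc
  obtain ⟨K, hK⟩ := exists_abs_gpam_reaction_le (hg.of_le one_le_two) (max B |M|) C S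
  have hreact : ∀ m ∈ Icc (-max B |M|) (max B |M|), g m = 0 → ∀ t ∈ Ioc 0 T, ∀ x y,
      |g (u t x y) * (ξ x y - C * deriv g (u t x y))| ≤ K * |u t x y - m| :=
    fun m hm hgm t ht x y => hK m hm hgm _
      (abs_le.1 ((hB t (Ioc_subset_Icc_self ht) x y).trans (le_max_left _ _))) _
      (hS 0 ⟨le_rfl, le_rfl⟩ x y)
  intro t ht x y
  refine abs_le.2 ⟨weak_minimum_principle (K := K) hup huc hutime (fun t ht x y hlt => ?_)
    (fun x y => (abs_le.1 (hu0 x y)).1) t ht x y,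
    weak_maximum_principle (K := K) hup huc hutime (fun t ht x y hlt => ?_)
    (fun x y => (abs_le.1 (hu0 x y)).2) t ht x y⟩
  · have h := (abs_le.1 (hreact (-M)
      (abs_le.1 ((abs_neg M).le.trans (le_max_right _ _))) hgM' t ht x y)).1
    rw [abs_of_neg (by linarith)] at h
    rw [heq t ht x y, planeLaplacian]
    linarith
  · have h := (abs_le.1 (hreact M (abs_le.1 (le_max_right _ _)) hgM t ht x y)).2
    rw [abs_of_pos (by linarith)] at h
    rw [heq t ht x y, planeLaplacian]
    linarith

/-- weak maximum principle / global bound for the renormalized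
gPAM equation `∂ₜ u = Δu + g(u)(ξ - C g'(u))` when `g(±M) = 0` and `|u₀| ≤ M`. -/
theorem stmt_2
    (g : ℝ → ℝ) (hg : ContDiff ℝ 2 g)
    (C T : ℝ) (hT : 0 < T)
    (ξ : ℝ → ℝ → ℝ) (hξc : Continuous fun p : ℝ × ℝ => ξ p.1 p.2)
    (hξp : SpacePeriodic ξ)
    (M : ℝ) (hM : 0 < M) (hgM : g M = 0) (hgM' : g (-M) = 0)
    (u : ℝ → ℝ → ℝ → ℝ)
    -- `u` is periodic in its space variable
    (hup : ∀ t, SpacePeriodic (u t))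
    -- `u` is continuous on `[0,T] × ℝ²`
    (huc : ContinuousOn (fun p : ℝ × ℝ × ℝ => u p.1 p.2.1 p.2.2) (Icc 0 T ×ˢ univ))
    -- `u` is twice continuously differentiable in space on `(0,T] × ℝ²`
    (huspace : ∀ t ∈ Ioc 0 T, ContDiff ℝ 2 (fun p : ℝ × ℝ => u t p.1 p.2))
    -- `u` is once continuously differentiable in time on `(0,T] × ℝ²`
    (hutime : ∀ x y : ℝ, ∀ t ∈ Ioc 0 T, DifferentiableAt ℝ (fun s => u s x y) t)
    (hutimec : ∀ x y : ℝ, ContinuousOn (fun s => deriv (fun s' => u s' x y) s) (Ioc 0 T))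
    -- the equation holds on `(0,T] × ℝ²`
    (heq : ∀ t ∈ Ioc 0 T, ∀ x y : ℝ,
      deriv (fun s => u s x y) t =
        (deriv (fun a => deriv (fun b => u t b y) a) x
          + deriv (fun b => deriv (fun a => u t x a) b) y)
        + g (u t x y) * (ξ x y - C * deriv g (u t x y)))
    -- initial condition
    (hu0 : ∀ x y : ℝ, |u 0 x y| ≤ M) :
    ∀ t ∈ Icc 0 T, ∀ x y : ℝ, |u t x y| ≤ M :=
  stmt_2_general g hg C T ξ hξc hξp M hgM hgM' u hup huc hutime heq hu0
end

section
/- For C ∈ ℝ let M(C) : T_g → T_g be the linear map with M(C)(𝓘(Ξ)Ξ) = 𝓘(Ξ)Ξ − C·𝟏 and M(C)τ = τ for every other basis vector τ. Then C ↦ M(C) is a group homomorphism from (ℝ, +) into the group of linear automorphisms of T_g, i.e. M(0) = Id and M(C) ∘ M(C') = M(C + C'), and M(C) commutes with the structure group: M(C) ∘ Γ_a = Γ_a ∘ M(C) for all C ∈ ℝ and a ∈ ℝ³. -/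
/-- The basis symbols of the model space `T_g` for gPAM. -/
inductive B8 : Type
  | Xi | IXiXi | X1Xi | X2Xi | One | IXi | X1 | X2
  deriving DecidableEq

/-- The structure group map `Γ_a : T_g → T_g`, `a = (a₀, a₁, a₂) ∈ ℝ³`,
in coordinates. -/
def Gamma (a : ℝ × ℝ × ℝ) (v : B8 → ℝ) : B8 → ℝ
  | .Xi => v .Xi + a.1 * v .IXiXi + a.2.1 * v .X1Xi + a.2.2 * v .X2Xi
  | .One => v .One + a.1 * v .IXi + a.2.1 * v .X1 + a.2.2 * v .X2
  | b => v b

/-- The renormalization map `M(C) : T_g → T_g`, the linear map with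
`M(C)(𝓘(Ξ)Ξ) = 𝓘(Ξ)Ξ - C 𝟏` and fixing every other basis vector,
in coordinates. -/
def M8 (C : ℝ) (v : B8 → ℝ) : B8 → ℝ
  | .One => v .One - C * v .IXiXi
  | b => v b

/-! In coordinates `M(C) = 1 - C • N` with `N = renormShear` the rank-one map sending the
`𝓘(Ξ)Ξ`-coordinate to the `𝟏`-coordinate, and `Γ_a = 1 + K_a` with `K_a = structureShear a`
reading only the coordinates of `𝓘(Ξ)Ξ, X_iΞ, 𝓘(Ξ), X_i` and writing only those of `Ξ, 𝟏`.
Hence `N² = 0`, which makes `C ↦ 1 - C • N` additive, and `N K_a = K_a N = 0`, which makes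
`M(C)` commute with `Γ_a`. -/

section SquareZero

variable {S A : Type*} [CommSemiring S] [Ring A] [Algebra S A]

theorem one_sub_smul_mul_one_sub_smul {n : A} (hn : n * n = 0) (c c' : S) :
    (1 - c • n) * (1 - c' • n) = 1 - (c + c') • n := by
  rw [sub_mul, one_mul, mul_sub, mul_one, smul_mul_smul_comm, hn, smul_zero, add_smul]
  abel

theorem commute_one_sub_smul_one_add {n k : A} (hnk : n * k = 0) (hkn : k * n = 0) (c : S) :
    Commute (1 - c • n) (1 + k) :=
  (Commute.one_left _).sub_left
    (((Commute.one_right n).add_right (hnk.trans hkn.symm)).smul_left c)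

end SquareZero

open LinearMap in
def renormShear : Module.End ℝ (B8 → ℝ) :=
  single ℝ (fun _ => ℝ) .One ∘ₗ proj .IXiXi

open LinearMap in
def structureShear (a : ℝ × ℝ × ℝ) : Module.End ℝ (B8 → ℝ) :=
  single ℝ (fun _ => ℝ) .Xi ∘ₗ (a.1 • proj .IXiXi + a.2.1 • proj .X1Xi + a.2.2 • proj .X2Xi) +
    single ℝ (fun _ => ℝ) .One ∘ₗ (a.1 • proj .IXi + a.2.1 • proj .X1 + a.2.2 • proj .X2)

theorem M8_eq_one_sub_smul (C : ℝ) : M8 C = ⇑(1 - C • renormShear) := by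
  funext v b
  cases b <;> simp [M8, renormShear]

theorem Gamma_eq_one_add (a : ℝ × ℝ × ℝ) : Gamma a = ⇑(1 + structureShear a) := by
  funext v b
  cases b <;> simp [Gamma, structureShear] <;> ring

theorem renormShear_mul_self : renormShear * renormShear = 0 := by
  ext v b
  cases b <;> simp [renormShear]

theorem renormShear_mul_structureShear (a : ℝ × ℝ × ℝ) :
    renormShear * structureShear a = 0 := by
  ext v b
  cases b <;> simp [renormShear, structureShear]

theorem structureShear_mul_renormShear (a : ℝ × ℝ × ℝ) :
    structureShear a * renormShear = 0 := by
  ext v b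
  cases b <;> simp [renormShear, structureShear]

/-- `C ↦ M(C)` is a group homomorphism from `(ℝ,+)` into the
linear automorphisms of `T_g`, and it commutes with the structure group. -/
theorem stmt_7 :
    (∀ C : ℝ, IsLinearMap ℝ (M8 C)) ∧
    M8 0 = id ∧
    (∀ C C' : ℝ, M8 C ∘ M8 C' = M8 (C + C')) ∧
    (∀ (C : ℝ) (a : ℝ × ℝ × ℝ), M8 C ∘ Gamma a = Gamma a ∘ M8 C) := by
  simp only [M8_eq_one_sub_smul]
  refine ⟨fun C => LinearMap.isLinear _, ?_, fun C C' => ?_, fun C a => ?_⟩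
  · rw [zero_smul, sub_zero, Module.End.coe_one]
  · rw [← Module.End.coe_mul, one_sub_smul_mul_one_sub_smul renormShear_mul_self]
  · rw [Gamma_eq_one_add, ← Module.End.coe_mul, ← Module.End.coe_mul,
      (commute_one_sub_smul_one_add (renormShear_mul_structureShear a)
        (structureShear_mul_renormShear a) C).eq]
end

section
/- With the coproducts Δ : T_g → T_g ⊗ A₀ and Δ^H : T_g^H → T_g^H ⊗ A, the abstract translation map τ_H and the algebra homomorphism τ_H⁺ : A₀ → A defined below, one has the intertwining identity (τ_H ⊗ τ_H⁺) ∘ Δ = Δ^H ∘ τ_H as linear maps from T_g to T_g^H ⊗ A. -/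
open TensorProduct

instance : Fintype B8 :=
  ⟨{.Xi, .IXiXi, .X1Xi, .X2Xi, .One, .IXi, .X1, .X2}, fun x => by cases x <;> simp⟩

/-- The basis symbols of the extended model space `T_g^H`. -/
inductive B15 : Type
  | Xi | H | IXiXi | IXiH | IHXi | IHH | X1Xi | X1H | X2Xi | X2H
  | One | IXi | IH | X1 | X2
  deriving DecidableEq

instance : Fintype B15 :=
  ⟨{.Xi, .H, .IXiXi, .IXiH, .IHXi, .IHH, .X1Xi, .X1H, .X2Xi, .X2H, .One, .IXi, .IH, .X1, .X2},
    fun x => by cases x <;> simp⟩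

/-- `A₀ = ℝ[J_Ξ, X₁, X₂]`, with `J_Ξ = X 0`, `X₁ = X 1`, `X₂ = X 2`. -/
abbrev A0 : Type := MvPolynomial (Fin 3) ℝ

/-- `A = ℝ[J_Ξ, J_H, X₁, X₂]`, with `J_Ξ = X 0`, `J_H = X 1`, `X₁ = X 2`,
`X₂ = X 3`. -/
abbrev A4 : Type := MvPolynomial (Fin 4) ℝ

/-- The basis vector of `T_g = B8 → ℝ` corresponding to a symbol. -/
noncomputable def e8 (b : B8) : B8 → ℝ := Pi.single b 1

/-- The basis vector of `T_g^H = B15 → ℝ` corresponding to a symbol. -/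
noncomputable def e15 (b : B15) : B15 → ℝ := Pi.single b 1

/-- The abstract translation map `τ_H : T_g → T_g^H`. -/
noncomputable def tauH : (B8 → ℝ) →ₗ[ℝ] (B15 → ℝ) :=
  (Pi.basisFun ℝ B8).constr ℝ fun b =>
    match b with
    | .Xi => e15 .Xi + e15 .H
    | .IXiXi => e15 .IXiXi + e15 .IXiH + e15 .IHXi + e15 .IHH
    | .X1Xi => e15 .X1Xi + e15 .X1H
    | .X2Xi => e15 .X2Xi + e15 .X2H
    | .One => e15 .One
    | .IXi => e15 .IXi + e15 .IH
    | .X1 => e15 .X1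
    | .X2 => e15 .X2

/-- The algebra homomorphism `τ_H⁺ : A₀ → A`, `J_Ξ ↦ J_Ξ + J_H`, `X_i ↦ X_i`. -/
noncomputable def tauHplus : A0 →ₐ[ℝ] A4 :=
  MvPolynomial.aeval
    ![MvPolynomial.X 0 + MvPolynomial.X 1, MvPolynomial.X 2, MvPolynomial.X 3]

/-- The coproduct `Δ : T_g → T_g ⊗ A₀`. -/
noncomputable def Delta : (B8 → ℝ) →ₗ[ℝ] TensorProduct ℝ (B8 → ℝ) A0 :=
  (Pi.basisFun ℝ B8).constr ℝ fun b =>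
    match b with
    | .Xi => e8 .Xi ⊗ₜ[ℝ] (1 : A0)
    | .One => e8 .One ⊗ₜ[ℝ] (1 : A0)
    | .X1 => e8 .X1 ⊗ₜ[ℝ] (1 : A0) + e8 .One ⊗ₜ[ℝ] MvPolynomial.X 1
    | .X2 => e8 .X2 ⊗ₜ[ℝ] (1 : A0) + e8 .One ⊗ₜ[ℝ] MvPolynomial.X 2
    | .IXi => e8 .IXi ⊗ₜ[ℝ] (1 : A0) + e8 .One ⊗ₜ[ℝ] MvPolynomial.X 0
    | .IXiXi => e8 .IXiXi ⊗ₜ[ℝ] (1 : A0) + e8 .Xi ⊗ₜ[ℝ] MvPolynomial.X 0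
    | .X1Xi => e8 .X1Xi ⊗ₜ[ℝ] (1 : A0) + e8 .Xi ⊗ₜ[ℝ] MvPolynomial.X 1
    | .X2Xi => e8 .X2Xi ⊗ₜ[ℝ] (1 : A0) + e8 .Xi ⊗ₜ[ℝ] MvPolynomial.X 2

/-- The coproduct `Δ^H : T_g^H → T_g^H ⊗ A`. -/
noncomputable def DeltaH : (B15 → ℝ) →ₗ[ℝ] TensorProduct ℝ (B15 → ℝ) A4 :=
  (Pi.basisFun ℝ B15).constr ℝ fun b =>
    match b with
    | .Xi => e15 .Xi ⊗ₜ[ℝ] (1 : A4)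
    | .H => e15 .H ⊗ₜ[ℝ] (1 : A4)
    | .One => e15 .One ⊗ₜ[ℝ] (1 : A4)
    | .X1 => e15 .X1 ⊗ₜ[ℝ] (1 : A4) + e15 .One ⊗ₜ[ℝ] MvPolynomial.X 2
    | .X2 => e15 .X2 ⊗ₜ[ℝ] (1 : A4) + e15 .One ⊗ₜ[ℝ] MvPolynomial.X 3
    | .IXi => e15 .IXi ⊗ₜ[ℝ] (1 : A4) + e15 .One ⊗ₜ[ℝ] MvPolynomial.X 0
    | .IH => e15 .IH ⊗ₜ[ℝ] (1 : A4) + e15 .One ⊗ₜ[ℝ] MvPolynomial.X 1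
    | .IXiXi => e15 .IXiXi ⊗ₜ[ℝ] (1 : A4) + e15 .Xi ⊗ₜ[ℝ] MvPolynomial.X 0
    | .IXiH => e15 .IXiH ⊗ₜ[ℝ] (1 : A4) + e15 .H ⊗ₜ[ℝ] MvPolynomial.X 0
    | .IHXi => e15 .IHXi ⊗ₜ[ℝ] (1 : A4) + e15 .Xi ⊗ₜ[ℝ] MvPolynomial.X 1
    | .IHH => e15 .IHH ⊗ₜ[ℝ] (1 : A4) + e15 .H ⊗ₜ[ℝ] MvPolynomial.X 1
    | .X1Xi => e15 .X1Xi ⊗ₜ[ℝ] (1 : A4) + e15 .Xi ⊗ₜ[ℝ] MvPolynomial.X 2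
    | .X1H => e15 .X1H ⊗ₜ[ℝ] (1 : A4) + e15 .H ⊗ₜ[ℝ] MvPolynomial.X 2
    | .X2Xi => e15 .X2Xi ⊗ₜ[ℝ] (1 : A4) + e15 .Xi ⊗ₜ[ℝ] MvPolynomial.X 3
    | .X2H => e15 .X2H ⊗ₜ[ℝ] (1 : A4) + e15 .H ⊗ₜ[ℝ] MvPolynomial.X 3

/-! Both sides are linear, so it suffices to compare them on the eight basis symbols. There the
identity is bilinearity of `⊗` together with `τ_H⁺ J_Ξ = J_Ξ + J_H`: for instance
`(τ_H ⊗ τ_H⁺)(Ξ ⊗ J_Ξ) = (Ξ + H) ⊗ (J_Ξ + J_H)` splits into the four lower-order terms of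
`Δ^H (𝓘(Ξ)Ξ + 𝓘(Ξ)H + 𝓘(H)Ξ + 𝓘(H)H)`. -/

theorem Pi.basisFun_constr_single {R S M ι : Type*} [Semiring R] [Semiring S] [AddCommMonoid M]
    [Module R M] [Module S M] [SMulCommClass R S M] [Finite ι] [DecidableEq ι]
    (f : ι → M) (i : ι) : (Pi.basisFun R ι).constr S f (Pi.single i 1) = f i := by
  rw [← Pi.basisFun_apply, Module.Basis.constr_basis]

theorem tauHplus_X_zero : tauHplus (MvPolynomial.X 0) = MvPolynomial.X 0 + MvPolynomial.X 1 := by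
  simp [tauHplus]

theorem tauHplus_X_one : tauHplus (MvPolynomial.X 1) = MvPolynomial.X 2 := by simp [tauHplus]

theorem tauHplus_X_two : tauHplus (MvPolynomial.X 2) = MvPolynomial.X 3 := by simp [tauHplus]

/-- the intertwining identity
`(τ_H ⊗ τ_H⁺) ∘ Δ = Δ^H ∘ τ_H` as linear maps `T_g → T_g^H ⊗ A`. -/
theorem stmt_9 :
    (TensorProduct.map tauH tauHplus.toLinearMap) ∘ₗ Delta = DeltaH ∘ₗ tauH := by
  refine (Pi.basisFun ℝ B8).ext fun b => ?_
  cases b <;>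
    simp only [Pi.basisFun_apply, LinearMap.comp_apply, Delta, tauH, DeltaH, e8, e15,
      Pi.basisFun_constr_single, map_add, map_tmul, AlgHom.toLinearMap_apply, map_one,
      tauHplus_X_zero, tauHplus_X_one, tauHplus_X_two, tmul_add, add_tmul] <;>
    abel
end

section
/- Let c₀ be the Banach space of real sequences (u_n)_{n∈ℕ} converging to 0, equipped with the supremum norm, and let F : c₀ → ℝ be the supremum functional F(u) = sup_{n∈ℕ} u_n. Let u ∈ c₀ be such that F(u) > 0 and there is exactly one index n₀ with u_{n₀} = F(u). Then F is Fréchet differentiable at u, and its derivative is the continuous linear functional h ↦ h_{n₀}. -/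
/-!
Because `u` tends to `0` while its supremum is positive, only finitely many values of `u` come
close to the supremum, so the uniquely attained maximum is isolated: `u n ≤ c < u n₀` for all
`n ≠ n₀`. On the ball of radius `(u n₀ - c) / 2` around `u` the supremum functional therefore
coincides with the continuous linear functional `v ↦ v n₀`.
-/

open Filter Topology Set ZeroAtInfty

theorem exists_lt_forall_le_of_tendsto_cofinite {α β : Type*} [LinearOrder β] [DenselyOrdered β]
    [TopologicalSpace β] [OrderTopology β] {f : α → β} {a M : β} {s : Set α}
    (hf : Tendsto f cofinite (𝓝 a)) (haM : a < M) (hlt : ∀ x ∈ s, f x < M) :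
    ∃ c < M, ∀ x ∈ s, f x ≤ c := by
  obtain ⟨b, hab, hbM⟩ := exists_between haM
  have hfin : {x | x ∈ s ∧ b ≤ f x}.Finite :=
    (eventually_cofinite.mp (hf.eventually (gt_mem_nhds hab))).subset
      fun x hx => not_lt.mpr hx.2
  rcases Set.eq_empty_or_nonempty {x | x ∈ s ∧ b ≤ f x} with hempty | hne
  · refine ⟨b, hbM, fun x hx => le_of_not_ge fun hbx => ?_⟩
    exact hempty.subset ⟨hx, hbx⟩
  · obtain ⟨x₀, ⟨hx₀s, -⟩, hx₀⟩ := Set.exists_max_image _ f hfin hne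
    refine ⟨max b (f x₀), max_lt hbM (hlt x₀ hx₀s), fun x hx => ?_⟩
    rcases le_total b (f x) with hbx | hxb
    · exact (hx₀ x ⟨hx, hbx⟩).trans (le_max_right _ _)
    · exact hxb.trans (le_max_left _ _)

namespace ZeroAtInftyContinuousMap

variable {α : Type*} [TopologicalSpace α]

section eval

variable (𝕜 : Type*) {β : Type*} [NormedField 𝕜] [SeminormedAddCommGroup β] [NormedSpace 𝕜 β]

theorem norm_apply_le_norm (v : C₀(α, β)) (x : α) : ‖v x‖ ≤ ‖v‖ :=
  norm_toBCF_eq_norm (f := v) ▸ v.toBCF.norm_coe_le_norm x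

noncomputable def evalCLM (x : α) : C₀(α, β) →L[𝕜] β :=
  LinearMap.mkContinuous
    { toFun := fun v => v x
      map_add' := fun _ _ => rfl
      map_smul' := fun _ _ => rfl } 1
    fun v => by rw [one_mul]; exact norm_apply_le_norm v x

@[simp]
theorem evalCLM_apply (x : α) (v : C₀(α, β)) : evalCLM 𝕜 x v = v x := rfl

end eval

theorem bddAbove_range (v : C₀(α, ℝ)) : BddAbove (range v) :=
  ⟨‖v‖, forall_mem_range.mpr fun x => (le_abs_self _).trans (norm_apply_le_norm v x)⟩

theorem tendsto_cofinite [DiscreteTopology α] (v : C₀(α, ℝ)) : Tendsto v cofinite (𝓝 0) :=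
  cocompact_eq_cofinite α ▸ v.zero_at_infty'

theorem iSup_apply_eventuallyEq_apply {u : C₀(α, ℝ)} {x₀ : α} {c : ℝ} (hc : c < u x₀)
    (hle : ∀ x ≠ x₀, u x ≤ c) : (fun v : C₀(α, ℝ) => ⨆ x, v x) =ᶠ[𝓝 u] evalCLM ℝ x₀ := by
  have : Nonempty α := ⟨x₀⟩
  have hδ : 0 < (u x₀ - c) / 2 := by linarith
  filter_upwards [Metric.ball_mem_nhds u hδ] with v hv
  have hclose : ∀ x, |v x - u x| < (u x₀ - c) / 2 := fun x =>
    (norm_apply_le_norm (v - u) x).trans_lt (dist_eq_norm v u ▸ hv)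
  rw [evalCLM_apply]
  refine le_antisymm (ciSup_le fun x => ?_) (le_ciSup (bddAbove_range v) x₀)
  rcases eq_or_ne x x₀ with rfl | hx
  · rfl
  · linarith [hle x hx, abs_lt.mp (hclose x), abs_lt.mp (hclose x₀)]

theorem hasFDerivAt_iSup_apply {u : C₀(α, ℝ)} {x₀ : α} {c : ℝ} (hc : c < u x₀)
    (hle : ∀ x ≠ x₀, u x ≤ c) :
    HasFDerivAt (fun v : C₀(α, ℝ) => ⨆ x, v x) (evalCLM ℝ x₀) u :=
  ((evalCLM ℝ x₀).hasFDerivAt (x := u)).congr_of_eventuallyEq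
    (iSup_apply_eventuallyEq_apply hc hle)

end ZeroAtInftyContinuousMap

/-- the supremum functional on `c₀` (real sequences tending to
zero, with the sup norm) is Fréchet differentiable at every point whose
supremum is positive and attained at exactly one index, with derivative the
evaluation at that index. -/
theorem stmt_11 (u : ZeroAtInftyContinuousMap ℕ ℝ) (n₀ : ℕ)
    (hpos : 0 < ⨆ n, u n)
    (hmax : u n₀ = ⨆ n, u n)
    (huniq : ∀ m, u m = (⨆ n, u n) → m = n₀) :
    ∃ L : ZeroAtInftyContinuousMap ℕ ℝ →L[ℝ] ℝ,
      (∀ h : ZeroAtInftyContinuousMap ℕ ℝ, L h = h n₀) ∧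
      HasFDerivAt (fun v : ZeroAtInftyContinuousMap ℕ ℝ => ⨆ n, v n) L u := by
  have hlt : ∀ n ∈ ({n₀}ᶜ : Set ℕ), u n < ⨆ m, u m := fun n hn =>
    (le_ciSup u.bddAbove_range n).lt_of_ne fun h => hn (huniq n h)
  obtain ⟨c, hc, hle⟩ := exists_lt_forall_le_of_tendsto_cofinite u.tendsto_cofinite hpos hlt
  exact ⟨_, fun _ => rfl, ZeroAtInftyContinuousMap.hasFDerivAt_iSup_apply (hmax ▸ hc) hle⟩
end
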